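/- Let L be the model of the free graded Lie algebra on two generators a, b of odd degree described in the context. The family of elements ⁅ad(a)^{i−1}(b), ad(a)^{j−1}(b)⁆, indexed by pairs (i, j) with 1 ≤ i ≤ j such that it is not the case that i = j with i even, is linearly independent and spans L^{(2)}, the part of L of word length 2 in b. Moreover the element indexed by (i, j) lies in L^{(2, i+j)}, and for each n ≥ 2 the elements with i + j = n form a ℚ-basis of L^{(2,n)}. -/

import Mathlib

/-!
Common setup: the free graded Lie algebra on two odd-degree generators `a`, `b`,
modelled inside its universal enveloping algebra `A := FreeAlgebra ℚ (Fin 2)`.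
-/

noncomputable section

namespace Omnibus

/-- The free associative unital `ℚ`-algebra on two generators. -/
abbrev A : Type := FreeAlgebra ℚ (Fin 2)

/-- The first generator, of odd degree. -/
def a : A := FreeAlgebra.ι ℚ 0

/-- The second generator, of odd degree. -/
def b : A := FreeAlgebra.ι ℚ 1

/-- The word (noncommutative monomial) in the letters `a`, `b` associated to a
list of letters. -/
def word (w : List (Fin 2)) : A := (w.map (FreeAlgebra.ι ℚ)).prod

/-- The `ℚ`-basis of `A` given by the words in `a`, `b`. -/
def basisWords : Module.Basis (FreeMonoid (Fin 2)) ℚ A := FreeAlgebra.basisFreeMonoid ℚ (Fin 2)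

/-- The `ℚ`-linear projection of `A` onto the span of the words of odd length,
sending every word of even length to `0`. -/
def pr : A →ₗ[ℚ] A :=
  basisWords.constr ℚ fun w =>
    if Odd (FreeMonoid.toList w).length then word (FreeMonoid.toList w) else 0

/-- The bracket `⁅x,y⁆ = x*y − y*x + 2·(π y)·(π x)`; on elements homogeneous for the
parity grading by word length this is the super-commutator for both generators odd. -/
def br (x y : A) : A := x * y - y * x + 2 * pr y * pr x

/-- A `ℚ`-subspace of `A` closed under the bracket. -/
def IsBracketClosed (S : Submodule ℚ A) : Prop := ∀ x ∈ S, ∀ y ∈ S, br x y ∈ S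

/-- `L`: the smallest `ℚ`-subspace of `A` containing `a`, `b` and closed under the
bracket; a model of the free graded Lie algebra on two odd-degree generators. -/
def L : Submodule ℚ A := sInf {S : Submodule ℚ A | a ∈ S ∧ b ∈ S ∧ IsBracketClosed S}

/-- The span of the set of words `w` satisfying a property `P`. -/
def wordsSpan (P : List (Fin 2) → Prop) : Submodule ℚ A :=
  Submodule.span ℚ (word '' {w | P w})

/-- `L^{(k)}`: the part of `L` of word length `k` in `b`. -/
def Lk (k : ℕ) : Submodule ℚ A := L ⊓ wordsSpan fun w => w.count 1 = k

/-- `L^{(k,n)}`: the part of `L` of word length `k` in `b` and total word length `n`. -/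
def Lkn (k n : ℕ) : Submodule ℚ A :=
  L ⊓ wordsSpan fun w => w.count 1 = k ∧ w.length = n

/-- The `j`-fold iterated adjoint map `ad(x)^j(y)`. -/
def adIter (x : A) (j : ℕ) (y : A) : A := (br x)^[j] y

end Omnibus

namespace Omnibus

/-- The admissible index pairs `(i,j)`: `1 ≤ i ≤ j` and not (`i = j` with `i` even). -/
def idxOK (p : ℕ × ℕ) : Prop := 1 ≤ p.1 ∧ p.1 ≤ p.2 ∧ ¬(p.1 = p.2 ∧ Even p.1)

/-- The element `⁅ad(a)^{i−1}(b), ad(a)^{j−1}(b)⁆` indexed by the pair `(i,j)`. -/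
def pairElt (p : ℕ × ℕ) : A := br (adIter a (p.1 - 1) b) (adIter a (p.2 - 1) b)

end Omnibus

/-!
Every element of `L` lies in `N + W`, where `N` is spanned by `a`, `a²`, the elements
`ad(a)^m b` and their pairwise brackets, and `W` is spanned by the words containing at least three
letters `b`. Indeed `N + W` contains `a` and `b` and is closed under the bracket: `ad a` preserves
`N`, `ad(a²) = ad(a)²`, brackets of total `b`-degree at least three land in `W`, and the remaining
brackets reduce to these by graded antisymmetry. Projecting onto `b`-degree two, `L^{(2)}` is
spanned by the brackets `⁅ad(a)^p b, ad(a)^q b⁆`, and graded antisymmetry reduces these to the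
admissible ones. These are linearly independent by triangularity: the one indexed by `(i,j)` has
coefficient `±1` or `2` on the word `a^{j-1} b a^{i-1} b`, which does not occur in those indexed by
`(i',j') ≠ (i,j)` with `j' ≤ j`.
-/

theorem linearIndependent_of_triangular {ι R M β : Type*} [Ring R] [NoZeroDivisors R]
    [AddCommGroup M] [Module R M] [LinearOrder β] {v : ι → M} (f : ι → M →ₗ[R] R) (μ : ι → β)
    (hdiag : ∀ i, f i (v i) ≠ 0) (hoff : ∀ i j, μ j ≤ μ i → j ≠ i → f i (v j) = 0) :
    LinearIndependent R v := by
  classical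
  rw [linearIndependent_iff]
  intro c hc
  by_contra hne
  obtain ⟨i, hi, hmax⟩ := c.support.exists_max_image μ (Finsupp.support_nonempty_iff.2 hne)
  have hci : c i * f i (v i) = 0 := by
    have := congrArg (f i) hc
    rwa [Finsupp.linearCombination_apply, Finsupp.sum, map_sum, map_zero,
      Finset.sum_eq_single_of_mem i hi fun j hj hji => by
        rw [map_smul, hoff i j (hmax j hj) hji, smul_zero], map_smul, smul_eq_mul] at this
  exact Finsupp.mem_support_iff.1 hi ((mul_eq_zero.1 hci).resolve_right (hdiag i))

namespace Omnibus

theorem word_append (u v : List (Fin 2)) : word (u ++ v) = word u * word v := by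
  simp [word]

theorem basisWords_apply (m : FreeMonoid (Fin 2)) : basisWords m = word m.toList := by
  simp [basisWords, FreeAlgebra.basisFreeMonoid, FreeAlgebra.equivMonoidAlgebraFreeMonoid, word,
    FreeMonoid.lift_apply]

theorem word_eq_basisWords (w : List (Fin 2)) : word w = basisWords (FreeMonoid.ofList w) := by
  rw [basisWords_apply, FreeMonoid.toList_ofList]

theorem a_eq_word : a = word [0] := by simp [word, a]

theorem b_eq_word : b = word [1] := by simp [word, b]

section WordsSpan

variable {P Q R : List (Fin 2) → Prop}

theorem word_mem_wordsSpan {w : List (Fin 2)} (h : P w) : word w ∈ wordsSpan P :=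
  Submodule.subset_span ⟨w, h, rfl⟩

theorem wordsSpan_mono (h : ∀ w, P w → Q w) : wordsSpan P ≤ wordsSpan Q :=
  Submodule.span_mono fun _ ⟨w, hw, hx⟩ => ⟨w, h w hw, hx⟩

theorem mem_wordsSpan_true (y : A) : y ∈ wordsSpan fun _ => True := by
  refine (Submodule.span_le.2 ?_ : Submodule.span ℚ (Set.range basisWords) ≤ _)
    (basisWords.span_eq ▸ Submodule.mem_top)
  rintro _ ⟨m, rfl⟩
  rw [basisWords_apply]
  exact word_mem_wordsSpan trivial

theorem mul_mem_wordsSpan (h : ∀ u v, P u → Q v → R (u ++ v)) {x y : A}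
    (hx : x ∈ wordsSpan P) (hy : y ∈ wordsSpan Q) : x * y ∈ wordsSpan R := by
  have := Submodule.mul_mem_mul hx hy
  rw [wordsSpan, wordsSpan, Submodule.span_mul_span] at this
  refine Submodule.span_le.2 ?_ this
  rintro _ ⟨_, ⟨u, hu, rfl⟩, _, ⟨v, hv, rfl⟩, rfl⟩
  change word u * word v ∈ wordsSpan R
  exact word_append u v ▸ word_mem_wordsSpan (h u v hu hv)

end WordsSpan

section WordsProj

variable (Q : List (Fin 2) → Prop) [DecidablePred Q]

def wordsProj : A →ₗ[ℚ] A :=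
  basisWords.constr ℚ fun m => if Q m.toList then word m.toList else 0

theorem wordsProj_word (w : List (Fin 2)) : wordsProj Q (word w) = if Q w then word w else 0 := by
  rw [word_eq_basisWords, wordsProj, Module.Basis.constr_basis, FreeMonoid.toList_ofList,
    word_eq_basisWords]

variable {Q} {P : List (Fin 2) → Prop} {x : A}

theorem wordsProj_eq_self (h : ∀ w, P w → Q w) (hx : x ∈ wordsSpan P) : wordsProj Q x = x :=
  LinearMap.eqOn_span' (f := wordsProj Q) (g := LinearMap.id)
    (by rintro _ ⟨w, hw, rfl⟩; simp [wordsProj_word, h w hw]) hx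

theorem wordsProj_eq_zero (h : ∀ w, P w → ¬Q w) (hx : x ∈ wordsSpan P) : wordsProj Q x = 0 :=
  LinearMap.eqOn_span' (f := wordsProj Q) (g := 0)
    (by rintro _ ⟨w, hw, rfl⟩; simp [wordsProj_word, h w hw]) hx

end WordsProj

def wordCoeff (w : List (Fin 2)) : A →ₗ[ℚ] ℚ := basisWords.coord (FreeMonoid.ofList w)

theorem wordCoeff_word (w v : List (Fin 2)) : wordCoeff w (word v) = if v = w then 1 else 0 := by
  classical
  rw [wordCoeff, word_eq_basisWords, Module.Basis.coord_apply, Module.Basis.repr_self,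
    Finsupp.single_apply]
  simp [eq_comm]

theorem wordCoeff_eq_zero {P : List (Fin 2) → Prop} {w : List (Fin 2)} {x : A}
    (hx : x ∈ wordsSpan P) (hw : ¬P w) : wordCoeff w x = 0 :=
  LinearMap.eqOn_span' (f := wordCoeff w) (g := 0)
    (by rintro _ ⟨v, hv, rfl⟩; simp [wordCoeff_word, show v ≠ w by rintro rfl; exact hw hv]) hx

theorem wordCoeff_append_mul {u v : List (Fin 2)} {x : A}
    (hx : x ∈ wordsSpan fun w => w.length = u.length) (y : A) :
    wordCoeff (u ++ v) (x * y) = wordCoeff u x * wordCoeff v y := by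
  induction hx using Submodule.span_induction with
  | mem _ h =>
    obtain ⟨w, hw, rfl⟩ := h
    suffices (wordCoeff (u ++ v)).comp (LinearMap.mulLeft ℚ (word w)) =
        wordCoeff u (word w) • wordCoeff v from LinearMap.congr_fun this y
    refine basisWords.ext fun m => ?_
    by_cases hwu : w = u <;>
      simp [basisWords_apply, ← word_append, wordCoeff_word,
        List.append_eq_append_iff_of_size_eq_left hw, hwu]
  | zero => simp
  | add x x' _ _ hx hx' => simp [add_mul, hx, hx']
  | smul c x _ hx => simp [hx, mul_assoc]

theorem br_add_left (x y z : A) : br (x + y) z = br x z + br y z := by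
  simp only [br, map_add]; noncomm_ring

theorem br_add_right (x y z : A) : br x (y + z) = br x y + br x z := by
  simp only [br, map_add]; noncomm_ring

theorem br_smul_left (c : ℚ) (x y : A) : br (c • x) y = c • br x y := by
  simp only [br, map_smul, smul_mul_assoc, mul_smul_comm]; module

theorem br_smul_right (c : ℚ) (x y : A) : br x (c • y) = c • br x y := by
  simp only [br, map_smul, smul_mul_assoc, mul_smul_comm]; module

def brBilin : A →ₗ[ℚ] A →ₗ[ℚ] A :=
  LinearMap.mk₂ ℚ br br_add_left br_smul_left br_add_right br_smul_right

@[simp] theorem brBilin_apply (x y : A) : brBilin x y = br x y := rfl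

theorem br_mem_of_mem_span {S T : Set A} {U : Submodule ℚ A} (h : ∀ s ∈ S, ∀ t ∈ T, br s t ∈ U)
    {x y : A} (hx : x ∈ Submodule.span ℚ S) (hy : y ∈ Submodule.span ℚ T) : br x y ∈ U := by
  have := Submodule.apply_mem_map₂ brBilin hx hy
  rw [Submodule.map₂_span_span] at this
  exact Submodule.span_le.2 (by rintro _ ⟨s, hs, t, ht, rfl⟩; exact h s hs t ht) this

def homog (k n : ℕ) : Submodule ℚ A := wordsSpan fun w => w.count 1 = k ∧ w.length = n

section Homog

variable {k l m n : ℕ} {x y : A}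

theorem word_mem_homog (w : List (Fin 2)) : word w ∈ homog (w.count 1) w.length :=
  word_mem_wordsSpan ⟨rfl, rfl⟩

theorem a_mem_homog : a ∈ homog 0 1 := a_eq_word ▸ word_mem_homog [0]

theorem b_mem_homog : b ∈ homog 1 1 := b_eq_word ▸ word_mem_homog [1]

theorem mul_mem_homog (hx : x ∈ homog k m) (hy : y ∈ homog l n) : x * y ∈ homog (k + l) (m + n) :=
  mul_mem_wordsSpan (by rintro u v ⟨rfl, rfl⟩ ⟨rfl, rfl⟩; simp) hx hy

theorem wordsProj_of_mem_homog (R : ℕ → ℕ → Prop)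
    [DecidablePred fun w : List (Fin 2) => R (w.count 1) w.length] [Decidable (R k n)]
    (hx : x ∈ homog k n) :
    wordsProj (fun w => R (w.count 1) w.length) x = if R k n then x else 0 := by
  split_ifs with h
  · exact wordsProj_eq_self (fun w hw => by rwa [hw.1, hw.2]) hx
  · exact wordsProj_eq_zero (fun w hw => by rwa [hw.1, hw.2]) hx

-- `pr` is definitionally `wordsProj fun w => Odd w.length`.
theorem pr_of_mem_homog (hx : x ∈ homog k n) : pr x = if Odd n then x else 0 :=
  wordsProj_of_mem_homog (fun _ n => Odd n) hx

theorem br_of_mem_homog (hx : x ∈ homog k m) (hy : y ∈ homog l n) :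
    br x y = x * y - (-1) ^ (m * n) * (y * x) := by
  rw [br, pr_of_mem_homog hx, pr_of_mem_homog hy]
  by_cases hm : Odd m
  · by_cases hn : Odd n
    · simp only [if_pos hm, if_pos hn, (hm.mul hn).neg_one_pow]; noncomm_ring
    · simp only [if_pos hm, if_neg hn, ((Nat.not_odd_iff_even.1 hn).mul_left m).neg_one_pow]
      noncomm_ring
  · simp only [if_neg hm, mul_zero, ((Nat.not_odd_iff_even.1 hm).mul_right n).neg_one_pow]
    noncomm_ring

theorem br_mem_homog (hx : x ∈ homog k m) (hy : y ∈ homog l n) :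
    br x y ∈ homog (k + l) (m + n) := by
  have hyx : y * x ∈ homog (k + l) (m + n) := add_comm k l ▸ add_comm m n ▸ mul_mem_homog hy hx
  rw [br_of_mem_homog hx hy]
  rcases neg_one_pow_eq_or A (m * n) with h | h <;> rw [h]
  · simpa using sub_mem (mul_mem_homog hx hy) hyx
  · simpa using add_mem (mul_mem_homog hx hy) hyx

theorem br_comm_of_mem_homog (hx : x ∈ homog k m) (hy : y ∈ homog l n) :
    br x y = -(-1) ^ (m * n) * br y x := by
  rw [br_of_mem_homog hx hy, br_of_mem_homog hy hx, Nat.mul_comm n m]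
  rcases neg_one_pow_eq_or A (m * n) with h | h <;> rw [h] <;> noncomm_ring

theorem br_self_of_mem_homog (hx : x ∈ homog k m) (hm : Even m) : br x x = 0 := by
  rw [br_of_mem_homog hx hx, (hm.mul_right m).neg_one_pow]; noncomm_ring

theorem br_a_br_of_mem_homog (hx : x ∈ homog k m) (hy : y ∈ homog l n) :
    br a (br x y) = br (br a x) y + (-1) ^ m * br x (br a y) := by
  rw [br_of_mem_homog a_mem_homog (br_mem_homog hx hy),
    br_of_mem_homog (br_mem_homog a_mem_homog hx) hy,
    br_of_mem_homog hx (br_mem_homog a_mem_homog hy), br_of_mem_homog hx hy,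
    br_of_mem_homog a_mem_homog hx, br_of_mem_homog a_mem_homog hy]
  rcases Nat.even_or_odd m with hm | hm <;> rcases Nat.even_or_odd n with hn | hn <;>
    simp only [one_mul, pow_add, pow_mul, add_mul, hm.neg_one_pow, hn.neg_one_pow, one_pow,
      pow_one] <;>
    noncomm_ring

end Homog

theorem neg_one_pow_mul_eq_smul (k : ℕ) (x : A) : (-1) ^ k * x = ((-1 : ℚ) ^ k) • x := by
  simp [Algebra.smul_def]

theorem neg_one_pow_mul_mem {S : Submodule ℚ A} (k : ℕ) {x : A} (hx : x ∈ S) :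
    (-1) ^ k * x ∈ S :=
  neg_one_pow_mul_eq_smul k x ▸ S.smul_mem _ hx

theorem br_a_mul_a (y : A) : br (a * a) y = br a (br a y) := by
  suffices brBilin (a * a) = (brBilin a).comp (brBilin a) from LinearMap.congr_fun this y
  refine basisWords.ext fun m => ?_
  have hw := word_mem_homog m.toList
  simp only [LinearMap.comp_apply, brBilin_apply, basisWords_apply]
  rw [br_of_mem_homog (mul_mem_homog a_mem_homog a_mem_homog) hw,
    br_of_mem_homog a_mem_homog (br_mem_homog a_mem_homog hw), br_of_mem_homog a_mem_homog hw]
  rcases Nat.even_or_odd m.toList.length with h | h <;>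
    simp only [one_mul, pow_add, pow_mul, h.neg_one_pow, pow_one, mul_neg, mul_one, neg_neg,
      one_pow] <;>
    noncomm_ring

def adAB (m : ℕ) : A := adIter a m b

def brAB (p q : ℕ) : A := br (adAB p) (adAB q)

theorem pairElt_eq_brAB (i j : ℕ) : pairElt (i, j) = brAB (i - 1) (j - 1) := rfl

theorem adAB_zero : adAB 0 = b := rfl

theorem adAB_succ (m : ℕ) : adAB (m + 1) = br a (adAB m) :=
  Function.iterate_succ_apply' _ _ _

theorem adAB_mem_homog (m : ℕ) : adAB m ∈ homog 1 (m + 1) := by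
  induction m with
  | zero => exact b_mem_homog
  | succ m ih => simpa [adAB_succ, add_comm] using br_mem_homog a_mem_homog ih

theorem brAB_mem_homog (p q : ℕ) : brAB p q ∈ homog 2 (p + q + 2) := by
  simpa [brAB, add_add_add_comm] using br_mem_homog (adAB_mem_homog p) (adAB_mem_homog q)

theorem br_a_brAB (p q : ℕ) :
    br a (brAB p q) = brAB (p + 1) q + (-1) ^ (p + 1) * brAB p (q + 1) := by
  simp only [brAB, adAB_succ]
  exact br_a_br_of_mem_homog (adAB_mem_homog p) (adAB_mem_homog q)

theorem brAB_comm (p q : ℕ) : brAB p q = -(-1) ^ ((p + 1) * (q + 1)) * brAB q p :=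
  br_comm_of_mem_homog (adAB_mem_homog p) (adAB_mem_homog q)

theorem brAB_self_of_odd {p : ℕ} (hp : Odd p) : brAB p p = 0 :=
  br_self_of_mem_homog (adAB_mem_homog p) (by simpa [Nat.even_add_one] using hp)

theorem a_mem_L : a ∈ L := Submodule.mem_sInf.2 fun _ hS => hS.1

theorem b_mem_L : b ∈ L := Submodule.mem_sInf.2 fun _ hS => hS.2.1

theorem isBracketClosed_L : IsBracketClosed L := fun _ hx _ hy =>
  Submodule.mem_sInf.2 fun S hS =>
    hS.2.2 _ (Submodule.mem_sInf.1 hx S hS) _ (Submodule.mem_sInf.1 hy S hS)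

theorem adAB_mem_L (m : ℕ) : adAB m ∈ L := by
  induction m with
  | zero => exact b_mem_L
  | succ m ih => rw [adAB_succ]; exact isBracketClosed_L _ a_mem_L _ ih

theorem brAB_mem_L (p q : ℕ) : brAB p q ∈ L :=
  isBracketClosed_L _ (adAB_mem_L p) _ (adAB_mem_L q)

theorem wordCoeff_mul_of_mem_homog {u : List (Fin 2)} (v : List (Fin 2)) {k : ℕ} {x : A}
    (hx : x ∈ homog k u.length) (y : A) :
    wordCoeff (u ++ v) (x * y) = wordCoeff u x * wordCoeff v y :=
  wordCoeff_append_mul (wordsSpan_mono (fun _ hw => hw.2) hx) y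

theorem wordCoeff_adAB (m : ℕ) : wordCoeff (List.replicate m 0 ++ [1]) (adAB m) = 1 := by
  induction m with
  | zero => simp [adAB_zero, b_eq_word, wordCoeff_word]
  | succ m ih =>
    have ha : a ∈ homog 0 [(0 : Fin 2)].length := a_mem_homog
    have hm : adAB m ∈ homog 1 (List.replicate (m + 1) (0 : Fin 2)).length := by
      simpa using adAB_mem_homog m
    have h1 : wordCoeff (List.replicate (m + 1) 0 ++ [1]) (a * adAB m) = 1 := by
      rw [← ih]
      simpa [a_eq_word, wordCoeff_word, List.replicate_succ] using
        wordCoeff_mul_of_mem_homog (List.replicate m 0 ++ [1]) ha (adAB m)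
    have h2 : wordCoeff (List.replicate (m + 1) 0 ++ [1]) (adAB m * a) = 0 := by
      simp [wordCoeff_mul_of_mem_homog [1] hm, a_eq_word, wordCoeff_word]
    rw [adAB_succ, br_of_mem_homog a_mem_homog (adAB_mem_homog m), neg_one_pow_mul_eq_smul,
      map_sub, map_smul, h1, h2, smul_zero, sub_zero]

def leadWord (p q : ℕ) : List (Fin 2) :=
  List.replicate q 0 ++ [1] ++ (List.replicate p 0 ++ [1])

theorem wordCoeff_leadWord_adAB_mul {p q r : ℕ} (s : ℕ) (hr : r ≤ q) :
    wordCoeff (leadWord p q) (adAB r * adAB s) = if r = q ∧ s = p then 1 else 0 := by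
  rcases hr.eq_or_lt with rfl | hr
  · have hr : adAB r ∈ homog 1 (List.replicate r (0 : Fin 2) ++ [1]).length := by
      simpa using adAB_mem_homog r
    rw [leadWord, wordCoeff_mul_of_mem_homog _ hr, wordCoeff_adAB, one_mul]
    by_cases hs : s = p
    · simp [hs, wordCoeff_adAB]
    · rw [if_neg (by tauto)]
      exact wordCoeff_eq_zero (adAB_mem_homog s) (by simp; omega)
  · obtain ⟨t, rfl⟩ := Nat.exists_eq_add_of_lt hr
    have hr' : adAB r ∈ homog 1 (List.replicate (r + 1) (0 : Fin 2)).length := by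
      simpa using adAB_mem_homog r
    have hsplit : leadWord p (r + t + 1) = List.replicate (r + 1) 0 ++
        (List.replicate t 0 ++ [1] ++ (List.replicate p 0 ++ [1])) := by
      simp [leadWord, List.replicate_add, Nat.add_right_comm r t 1]
    rw [hsplit, wordCoeff_mul_of_mem_homog _ hr', if_neg (by omega),
      wordCoeff_eq_zero (adAB_mem_homog r) (by simp [List.count_replicate]), zero_mul]

theorem wordCoeff_leadWord_brAB {p q r s : ℕ} (hrs : r ≤ s) (hsq : s ≤ q) :
    wordCoeff (leadWord p q) (brAB r s) = (if r = q ∧ s = p then 1 else 0) -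
      (-1) ^ ((r + 1) * (s + 1)) * (if s = q ∧ r = p then 1 else 0) := by
  rw [brAB, br_of_mem_homog (adAB_mem_homog r) (adAB_mem_homog s), neg_one_pow_mul_eq_smul,
    map_sub, map_smul, wordCoeff_leadWord_adAB_mul s (hrs.trans hsq),
    wordCoeff_leadWord_adAB_mul r hsq, smul_eq_mul]

theorem linearIndependent_pairElt :
    LinearIndependent ℚ (fun p : {p : ℕ × ℕ // idxOK p} => pairElt p.1) := by
  refine linearIndependent_of_triangular (fun p => wordCoeff (leadWord (p.1.1 - 1) (p.1.2 - 1)))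
    (fun p => p.1.2) ?_ ?_
  · rintro ⟨⟨i, j⟩, hi, hij, hodd⟩
    dsimp only at hi hij hodd ⊢
    rw [pairElt_eq_brAB, wordCoeff_leadWord_brAB (by omega) le_rfl, Nat.sub_add_cancel hi,
      Nat.sub_add_cancel (hi.trans hij)]
    rcases hij.eq_or_lt with rfl | hij
    · have hi : Odd i := Nat.not_even_iff_odd.1 fun h => hodd ⟨rfl, h⟩
      norm_num [(hi.mul hi).neg_one_pow]
    · simp [show i - 1 ≠ j - 1 by omega]
  · intro ⟨⟨i, j⟩, hi, hij, _⟩ ⟨⟨i', j'⟩, hi', hij', _⟩ hj hji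
    have hne : ¬(i' = i ∧ j' = j) := fun ⟨h1, h2⟩ => hji (by subst h1 h2; rfl)
    dsimp only at hi hij hi' hij' hj ⊢
    rw [pairElt_eq_brAB, wordCoeff_leadWord_brAB (by omega) (by omega), if_neg (by omega),
      if_neg (by omega), mul_zero, sub_zero]

def bFilt (k : ℕ) : Submodule ℚ A := wordsSpan fun w => k ≤ w.count 1

theorem homog_le_bFilt {k l : ℕ} (h : k ≤ l) (n : ℕ) : homog l n ≤ bFilt k :=
  wordsSpan_mono fun _ hw => hw.1 ▸ h

theorem br_mem_bFilt_left {k : ℕ} {x : A} (hx : x ∈ bFilt k) (y : A) : br x y ∈ bFilt k := by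
  refine br_mem_of_mem_span ?_ hx (mem_wordsSpan_true y)
  rintro _ ⟨u, hu, rfl⟩ _ ⟨v, -, rfl⟩
  exact homog_le_bFilt (le_add_right hu) _ (br_mem_homog (word_mem_homog u) (word_mem_homog v))

theorem br_mem_bFilt_right {k : ℕ} (x : A) {y : A} (hy : y ∈ bFilt k) : br x y ∈ bFilt k := by
  refine br_mem_of_mem_span ?_ (mem_wordsSpan_true x) hy
  rintro _ ⟨u, -, rfl⟩ _ ⟨v, hv, rfl⟩
  exact homog_le_bFilt (le_add_left hv) _ (br_mem_homog (word_mem_homog u) (word_mem_homog v))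

def lowGens : Set A := {a, a * a} ∪ Set.range adAB ∪ Set.range (Function.uncurry brAB)

def lowSpan : Submodule ℚ A := Submodule.span ℚ lowGens

theorem exists_mem_homog_of_mem_lowGens {g : A} (hg : g ∈ lowGens) : ∃ k n, g ∈ homog k n := by
  rcases hg with ((rfl | rfl) | ⟨m, rfl⟩) | ⟨⟨p, q⟩, rfl⟩
  exacts [⟨_, _, a_mem_homog⟩, ⟨_, _, mul_mem_homog a_mem_homog a_mem_homog⟩,
    ⟨_, _, adAB_mem_homog m⟩, ⟨_, _, brAB_mem_homog p q⟩]

theorem aa_mem_lowSpan : a * a ∈ lowSpan := Submodule.subset_span (Or.inl (Or.inl (Or.inr rfl)))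

theorem adAB_mem_lowSpan (m : ℕ) : adAB m ∈ lowSpan :=
  Submodule.subset_span (Or.inl (Or.inr ⟨m, rfl⟩))

theorem brAB_mem_lowSpan (p q : ℕ) : brAB p q ∈ lowSpan :=
  Submodule.subset_span (Or.inr ⟨(p, q), rfl⟩)

theorem br_a_mem_lowSpan {y : A} (hy : y ∈ lowSpan) : br a y ∈ lowSpan := by
  refine (Submodule.span_le (p := lowSpan.comap (brBilin a))).2 ?_ hy
  rintro _ (((rfl | rfl) | ⟨m, rfl⟩) | ⟨⟨p, q⟩, rfl⟩) <;> simp only [SetLike.mem_coe,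
    Submodule.mem_comap, brBilin_apply]
  · rw [br_of_mem_homog a_mem_homog a_mem_homog]
    simpa [sub_eq_add_neg] using add_mem aa_mem_lowSpan aa_mem_lowSpan
  · rw [br_of_mem_homog a_mem_homog (mul_mem_homog a_mem_homog a_mem_homog), ← mul_assoc]
    simp [zero_mem]
  · exact adAB_succ m ▸ adAB_mem_lowSpan (m + 1)
  · rw [Function.uncurry_apply_pair, br_a_brAB]
    exact add_mem (brAB_mem_lowSpan _ _) (neg_one_pow_mul_mem _ (brAB_mem_lowSpan _ _))

theorem br_mem_lowSpan_of_left {g y : A} (hg : g ∈ ({a, a * a} : Set A)) (hy : y ∈ lowSpan) :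
    br g y ∈ lowSpan := by
  rcases hg with rfl | rfl
  · exact br_a_mem_lowSpan hy
  · rw [br_a_mul_a]
    exact br_a_mem_lowSpan (br_a_mem_lowSpan hy)

theorem br_mem_of_mem_lowGens {g g' : A} (hg : g ∈ lowGens) (hg' : g' ∈ lowGens) :
    br g g' ∈ lowSpan ⊔ bFilt 3 := by
  by_cases h0 : g ∈ ({a, a * a} : Set A)
  · exact Submodule.mem_sup_left (br_mem_lowSpan_of_left h0 (Submodule.subset_span hg'))
  by_cases h0' : g' ∈ ({a, a * a} : Set A)
  · obtain ⟨k, m, hm⟩ := exists_mem_homog_of_mem_lowGens hg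
    obtain ⟨l, n, hn⟩ := exists_mem_homog_of_mem_lowGens hg'
    rw [br_comm_of_mem_homog hm hn, neg_mul]
    exact Submodule.mem_sup_left (neg_mem (neg_one_pow_mul_mem _
      (br_mem_lowSpan_of_left h0' (Submodule.subset_span hg))))
  have h3 : ∀ {k l m n : ℕ} {x y : A}, x ∈ homog k m → y ∈ homog l n → 3 ≤ k + l →
      br x y ∈ lowSpan ⊔ bFilt 3 := fun hx hy h =>
    Submodule.mem_sup_right (homog_le_bFilt h _ (br_mem_homog hx hy))
  rcases hg with (h | ⟨p, rfl⟩) | ⟨⟨p, q⟩, rfl⟩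
  · exact absurd h h0
  · rcases hg' with (h | ⟨p', rfl⟩) | ⟨⟨p', q'⟩, rfl⟩
    · exact absurd h h0'
    · exact Submodule.mem_sup_left (brAB_mem_lowSpan p p')
    · exact h3 (adAB_mem_homog p) (brAB_mem_homog p' q') (by norm_num)
  · rcases hg' with (h | ⟨p', rfl⟩) | ⟨⟨p', q'⟩, rfl⟩
    · exact absurd h h0'
    · exact h3 (brAB_mem_homog p q) (adAB_mem_homog p') (by norm_num)
    · exact h3 (brAB_mem_homog p q) (brAB_mem_homog p' q') (by norm_num)

theorem isBracketClosed_lowSpan_sup_bFilt : IsBracketClosed (lowSpan ⊔ bFilt 3) := by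
  intro x hx y hy
  obtain ⟨x₁, hx₁, x₂, hx₂, rfl⟩ := Submodule.mem_sup.1 hx
  obtain ⟨y₁, hy₁, y₂, hy₂, rfl⟩ := Submodule.mem_sup.1 hy
  rw [br_add_left, br_add_right]
  refine add_mem (add_mem (br_mem_of_mem_span (fun g hg g' hg' => br_mem_of_mem_lowGens hg hg')
    hx₁ hy₁) ?_) (Submodule.mem_sup_right (br_mem_bFilt_left hx₂ _))
  exact Submodule.mem_sup_right (br_mem_bFilt_right _ hy₂)

theorem L_le_lowSpan_sup_bFilt : L ≤ lowSpan ⊔ bFilt 3 :=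
  sInf_le ⟨Submodule.mem_sup_left (Submodule.subset_span (Or.inl (Or.inl (Or.inl rfl)))),
    Submodule.mem_sup_left (adAB_mem_lowSpan 0), isBracketClosed_lowSpan_sup_bFilt⟩

def pairSpan (S : Set ℕ) : Submodule ℚ A :=
  Submodule.span ℚ {x | ∃ p : ℕ × ℕ, idxOK p ∧ p.1 + p.2 ∈ S ∧ x = pairElt p}

theorem brAB_mem_pairSpan {S : Set ℕ} {p q : ℕ} (h : p + q + 2 ∈ S) : brAB p q ∈ pairSpan S := by
  have hle : ∀ {p q : ℕ}, p ≤ q → p + q + 2 ∈ S → brAB p q ∈ pairSpan S := by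
    intro p q hpq h
    by_cases hodd : p = q ∧ Odd p
    · obtain ⟨rfl, hp⟩ := hodd
      rw [brAB_self_of_odd hp]
      exact zero_mem _
    have hok : idxOK (p + 1, q + 1) := ⟨by simp, by simpa, by simpa [Nat.even_add_one] using hodd⟩
    exact Submodule.subset_span ⟨(p + 1, q + 1), hok, by simpa [add_add_add_comm] using h, rfl⟩
  rcases le_total p q with hpq | hqp
  · exact hle hpq h
  · rw [brAB_comm, neg_mul]
    exact neg_mem (neg_one_pow_mul_mem _ (hle hqp (by rwa [add_comm q p])))

theorem mem_pairSpan_of_mem_L {S : Set ℕ} {x : A} (hx : x ∈ L)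
    (hS : x ∈ wordsSpan fun w => w.count 1 = 2 ∧ w.length ∈ S) : x ∈ pairSpan S := by
  classical
  let R : ℕ → ℕ → Prop := fun k n => k = 2 ∧ n ∈ S
  rw [← wordsProj_eq_self (Q := fun w => R (w.count 1) w.length) (fun _ h => h) hS]
  obtain ⟨y, hy, z, hz, rfl⟩ := Submodule.mem_sup.1 (L_le_lowSpan_sup_bFilt hx)
  rw [map_add, wordsProj_eq_zero (fun w hw hR => by simp only [R] at hR; omega) hz, add_zero]
  refine (Submodule.span_le (p := (pairSpan S).comap _)).2 ?_ hy
  rintro _ (((rfl | rfl) | ⟨m, rfl⟩) | ⟨⟨p, q⟩, rfl⟩) <;>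
    rw [SetLike.mem_coe, Submodule.mem_comap]
  · rw [wordsProj_of_mem_homog R a_mem_homog, if_neg (by simp [R])]
    exact zero_mem _
  · rw [wordsProj_of_mem_homog R (mul_mem_homog a_mem_homog a_mem_homog),
      if_neg (by simp [R])]
    exact zero_mem _
  · rw [wordsProj_of_mem_homog R (adAB_mem_homog m), if_neg (by simp [R])]
    exact zero_mem _
  · rw [Function.uncurry_apply_pair, wordsProj_of_mem_homog R (brAB_mem_homog p q)]
    split_ifs with h
    exacts [brAB_mem_pairSpan h.2, zero_mem _]

theorem pairElt_mem_Lkn {i j : ℕ} (hi : 1 ≤ i) (hj : 1 ≤ j) : pairElt (i, j) ∈ Lkn 2 (i + j) := by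
  refine ⟨brAB_mem_L _ _, ?_⟩
  have := brAB_mem_homog (i - 1) (j - 1)
  rwa [show i - 1 + (j - 1) + 2 = i + j by omega] at this

end Omnibus

open Omnibus in
/-- The family `⁅ad(a)^{i−1}(b), ad(a)^{j−1}(b)⁆` over admissible pairs `(i,j)` is linearly
independent and spans `L^{(2)}`; the element indexed by `(i,j)` lies in `L^{(2,i+j)}`, and for
each `n ≥ 2` the elements with `i + j = n` form a `ℚ`-basis of `L^{(2,n)}`. -/
theorem basis_wordLengthTwoInB :
    LinearIndependent ℚ (fun p : {p : ℕ × ℕ // idxOK p} => pairElt p.1) ∧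
    Submodule.span ℚ (Set.range fun p : {p : ℕ × ℕ // idxOK p} => pairElt p.1) = (Lk 2 : Submodule ℚ A) ∧
    (∀ p : {p : ℕ × ℕ // idxOK p}, pairElt p.1 ∈ Lkn 2 (p.1.1 + p.1.2)) ∧
    ∀ n : ℕ, 2 ≤ n →
      Submodule.span ℚ {x : A | ∃ p : ℕ × ℕ, idxOK p ∧ p.1 + p.2 = n ∧ x = pairElt p} =
        Lkn 2 n := by
  have hmem : ∀ p : {p : ℕ × ℕ // idxOK p}, pairElt p.1 ∈ Lkn 2 (p.1.1 + p.1.2) :=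
    fun ⟨_, hi, hij, _⟩ => pairElt_mem_Lkn hi (hi.trans hij)
  refine ⟨linearIndependent_pairElt, le_antisymm ?_ ?_, hmem, fun n _ => le_antisymm ?_ ?_⟩
  · refine Submodule.span_le.2 ?_
    rintro _ ⟨p, rfl⟩
    exact inf_le_inf_left L (wordsSpan_mono fun _ hw => hw.1) (hmem p)
  · rintro x ⟨hxL, hx⟩
    refine Submodule.span_mono ?_ (mem_pairSpan_of_mem_L (S := Set.univ) hxL (by simpa using hx))
    rintro _ ⟨p, hp, -, rfl⟩
    exact ⟨⟨p, hp⟩, rfl⟩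
  · refine Submodule.span_le.2 ?_
    rintro _ ⟨p, hp, rfl, rfl⟩
    exact hmem ⟨p, hp⟩
  · rintro x ⟨hxL, hx⟩
    exact mem_pairSpan_of_mem_L (S := {n}) hxL hx
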